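/- arXiv:2211.17230 — 8 statements merged into one kernel-verified Lean document; each statement's English description precedes it below -/
import Mathlib

section
/- For the standard normal pdf φ(x) = (1/√(2π))·exp(−x²/2), a < b real numbers, σ > 0, c > 0, and s ∈ [a,b], the ratio R(s) = (∫_a^b exp(−(x−s−c)²/(2σ²)) dx) / (∫_a^b exp(−(x−s)²/(2σ²)) dx) is strictly decreasing in s on [a,b]. -/
/-!
With `g u = exp (-u² / (2σ²))` and `F t = ∫ x in a..b, g (x - t)` we have
`R s = F (s + c) / F s`, so it suffices that `log F` is strictly concave. Writing `α = a - t`,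
`β = b - t`, the inequality `F'' F < F'²` says that the normal law of variance `σ²` truncated to
`[α, β]` has variance less than `σ²`. By Gaussian integration by parts (`x g(x) = -σ² g'(x)`)
this reduces to the truncated mean lying strictly inside `(α, β)`.
-/

open Real Set intervalIntegral

noncomputable def gaussianKernel (σ u : ℝ) : ℝ := exp (-u ^ 2 / (2 * σ ^ 2))

lemma gaussianKernel_pos (σ u : ℝ) : 0 < gaussianKernel σ u := exp_pos _

lemma continuous_gaussianKernel (σ : ℝ) : Continuous (gaussianKernel σ) := by
  unfold gaussianKernel; fun_prop

lemma hasDerivAt_gaussianKernel (σ u : ℝ) :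
    HasDerivAt (gaussianKernel σ) (-u / σ ^ 2 * gaussianKernel σ u) u := by
  refine ((hasDerivAt_pow 2 u).neg.div_const (2 * σ ^ 2)).exp.congr_deriv ?_
  simp only [gaussianKernel, Pi.neg_apply]
  rcases eq_or_ne σ 0 with rfl | hσ
  · simp
  · field_simp
    ring

lemma integral_id_mul_gaussianKernel {σ : ℝ} (hσ : σ ≠ 0) (p q : ℝ) :
    ∫ t in p..q, t * gaussianKernel σ t =
      σ ^ 2 * (gaussianKernel σ p - gaussianKernel σ q) := by
  have hderiv : ∀ t ∈ uIcc p q,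
      HasDerivAt (fun t => -σ ^ 2 * gaussianKernel σ t) (t * gaussianKernel σ t) t := by
    intro t _
    refine ((hasDerivAt_gaussianKernel σ t).const_mul (-σ ^ 2)).congr_deriv ?_
    field_simp
  rw [integral_eq_sub_of_hasDerivAt hderiv
    ((continuous_id.mul (continuous_gaussianKernel σ)).intervalIntegrable _ _)]
  ring

section Barycenter

variable {f : ℝ → ℝ} {α β : ℝ}

lemma mul_integral_lt_integral_id_mul (hαβ : α < β) (hf : ContinuousOn f (Icc α β))
    (hpos : ∀ x ∈ Icc α β, 0 < f x) :
    α * ∫ x in α..β, f x < ∫ x in α..β, x * f x := by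
  rw [← integral_const_mul]
  refine integral_lt_integral_of_continuousOn_of_le_of_exists_lt hαβ
    (continuousOn_const.mul hf) (continuousOn_id.mul hf) (fun x hx => ?_)
    ⟨β, right_mem_Icc.2 hαβ.le, ?_⟩
  · exact mul_le_mul_of_nonneg_right hx.1.le (hpos x (Ioc_subset_Icc_self hx)).le
  · exact mul_lt_mul_of_pos_right hαβ (hpos β (right_mem_Icc.2 hαβ.le))

lemma integral_id_mul_lt_mul_integral (hαβ : α < β) (hf : ContinuousOn f (Icc α β))
    (hpos : ∀ x ∈ Icc α β, 0 < f x) :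
    ∫ x in α..β, x * f x < β * ∫ x in α..β, f x := by
  rw [← integral_const_mul]
  refine integral_lt_integral_of_continuousOn_of_le_of_exists_lt hαβ
    (continuousOn_id.mul hf) (continuousOn_const.mul hf) (fun x hx => ?_)
    ⟨α, left_mem_Icc.2 hαβ.le, ?_⟩
  · exact mul_le_mul_of_nonneg_right hx.2 (hpos x (Ioc_subset_Icc_self hx)).le
  · exact mul_lt_mul_of_pos_right hαβ (hpos α (left_mem_Icc.2 hαβ.le))

end Barycenter

/-- Equivalently: the normal law of variance `σ²` truncated to `[α, β]` has variance less
than `σ²`. -/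
lemma truncated_gaussian_variance_lt {σ α β : ℝ} (hσ : σ ≠ 0) (hαβ : α < β) :
    (α / σ ^ 2 * gaussianKernel σ α - β / σ ^ 2 * gaussianKernel σ β) *
        ∫ t in α..β, gaussianKernel σ t
      < (gaussianKernel σ α - gaussianKernel σ β) ^ 2 := by
  set g := gaussianKernel σ
  set W := ∫ t in α..β, g t
  set M := ∫ t in α..β, t * g t
  have hM : M = σ ^ 2 * (g α - g β) := integral_id_mul_gaussianKernel hσ α β
  have hcont := (continuous_gaussianKernel σ).continuousOn (s := Icc α β)
  have hpos : ∀ x ∈ Icc α β, 0 < g x := fun x _ => gaussianKernel_pos σ x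
  have hlow : α * W < M := mul_integral_lt_integral_id_mul hαβ hcont hpos
  have hhigh : M < β * W := integral_id_mul_lt_mul_integral hαβ hcont hpos
  have hσ2 : 0 < σ ^ 2 := by positivity
  rw [← mul_lt_mul_iff_of_pos_left hσ2]
  calc σ ^ 2 * ((α / σ ^ 2 * g α - β / σ ^ 2 * g β) * W)
      = g α * (α * W) - g β * (β * W) := by field_simp
    _ < g α * M - g β * M :=
      sub_lt_sub (mul_lt_mul_of_pos_left hlow (gaussianKernel_pos σ α))
        (mul_lt_mul_of_pos_left hhigh (gaussianKernel_pos σ β))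
    _ = σ ^ 2 * (g α - g β) ^ 2 := by rw [hM]; ring

lemma strictAnti_logDeriv_of_mul_lt_sq {F F' F'' : ℝ → ℝ}
    (hF : ∀ t, HasDerivAt F (F' t) t) (hF' : ∀ t, HasDerivAt F' (F'' t) t)
    (hpos : ∀ t, 0 < F t) (hconc : ∀ t, F'' t * F t < F' t ^ 2) :
    StrictAnti fun t => F' t / F t :=
  strictAnti_of_hasDerivAt_neg (fun t => (hF' t).div (hF t) (hpos t).ne') fun t =>
    div_neg_of_neg_of_pos (by nlinarith [hconc t]) (pow_pos (hpos t) 2)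

lemma strictAnti_sub_comp_add_const {f f' : ℝ → ℝ} (hf : ∀ t, HasDerivAt f (f' t) t)
    (hf' : StrictAnti f') {c : ℝ} (hc : 0 < c) :
    StrictAnti fun s => f (s + c) - f s :=
  strictAnti_of_hasDerivAt_neg (fun s => ((hf (s + c)).comp_add_const s c).sub (hf s))
    fun s => sub_neg.2 (hf' (lt_add_of_pos_right s hc))

lemma strictAnti_div_comp_add_const {F F' : ℝ → ℝ} (hF : ∀ t, HasDerivAt F (F' t) t)
    (hpos : ∀ t, 0 < F t) (hlog : StrictAnti fun t => F' t / F t) {c : ℝ} (hc : 0 < c) :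
    StrictAnti fun s => F (s + c) / F s := by
  have hlogF : ∀ t, HasDerivAt (fun t => log (F t)) (F' t / F t) t :=
    fun t => (hF t).log (hpos t).ne'
  have hexp : ∀ s, F (s + c) / F s = exp (log (F (s + c)) - log (F s)) := fun s => by
    rw [exp_sub, exp_log (hpos _), exp_log (hpos _)]
  simp only [hexp]
  exact exp_strictMono.comp_strictAnti (strictAnti_sub_comp_add_const hlogF hlog hc)

noncomputable def gaussianMass (σ a b t : ℝ) : ℝ := ∫ x in a..b, gaussianKernel σ (x - t)

section GaussianMass

variable {σ a b : ℝ}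

lemma gaussianMass_pos (hab : a < b) (t : ℝ) : 0 < gaussianMass σ a b t :=
  intervalIntegral_pos_of_pos
    (((continuous_gaussianKernel σ).comp (continuous_sub_right t)).intervalIntegrable _ _)
    (fun _ => gaussianKernel_pos σ _) hab

lemma hasDerivAt_gaussianMass (t : ℝ) :
    HasDerivAt (gaussianMass σ a b) (gaussianKernel σ (a - t) - gaussianKernel σ (b - t)) t := by
  have hprim (y : ℝ) :
      HasDerivAt (fun x => ∫ u in 0..x, gaussianKernel σ u) (gaussianKernel σ y) y :=
    ((continuous_gaussianKernel σ).integral_hasStrictDerivAt 0 y).hasDerivAt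
  have hmass : gaussianMass σ a b = fun t =>
      (∫ u in 0..b - t, gaussianKernel σ u) - ∫ u in 0..a - t, gaussianKernel σ u := by
    ext t
    rw [gaussianMass, integral_comp_sub_right (gaussianKernel σ),
      integral_interval_sub_left ((continuous_gaussianKernel σ).intervalIntegrable _ _)
        ((continuous_gaussianKernel σ).intervalIntegrable _ _)]
  rw [hmass]
  exact (((hprim (b - t)).comp_const_sub b t).fun_sub
    ((hprim (a - t)).comp_const_sub a t)).congr_deriv (by ring)

lemma strictAnti_logDeriv_gaussianMass (hσ : σ ≠ 0) (hab : a < b) :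
    StrictAnti fun t =>
      (gaussianKernel σ (a - t) - gaussianKernel σ (b - t)) / gaussianMass σ a b t := by
  have hkernel (d t : ℝ) : HasDerivAt (fun t => gaussianKernel σ (d - t))
      ((d - t) / σ ^ 2 * gaussianKernel σ (d - t)) t :=
    ((hasDerivAt_gaussianKernel σ (d - t)).comp_const_sub d t).congr_deriv (by ring)
  refine strictAnti_logDeriv_of_mul_lt_sq hasDerivAt_gaussianMass
    (fun t => (hkernel a t).sub (hkernel b t)) (gaussianMass_pos hab) fun t => ?_
  rw [gaussianMass, integral_comp_sub_right (gaussianKernel σ)]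
  exact truncated_gaussian_variance_lt hσ (sub_lt_sub_right hab t)

end GaussianMass

theorem ratio_strict_anti (a b c σ : ℝ) (hab : a < b) (hc : 0 < c) (hσ : 0 < σ)
    (R : ℝ → ℝ)
    (hR : ∀ s, R s = (∫ x in a..b, Real.exp (-(x - s - c)^2 / (2 * σ^2))) /
        (∫ x in a..b, Real.exp (-(x - s)^2 / (2 * σ^2)))) :
    ∀ s₁ s₂, a ≤ s₁ → s₁ < s₂ → s₂ ≤ b → R s₁ > R s₂ := by
  have hRmass : R = fun s => gaussianMass σ a b (s + c) / gaussianMass σ a b s := by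
    ext s
    simp only [hR, gaussianMass, gaussianKernel, sub_sub]
  intro s₁ s₂ _ h12 _
  rw [hRmass]
  exact strictAnti_div_comp_add_const hasDerivAt_gaussianMass (gaussianMass_pos hab)
    (strictAnti_logDeriv_gaussianMass hσ.ne' hab) hc h12
end

section
/- For a < b, σ > 0, and s ∈ [a,b], and c ranging over (0, ΔQ] with ΔQ ≤ b − a, the function c ↦ (∫_a^b exp(−(x−a−c)²/(2σ²)) dx) / (∫_a^b exp(−(x−a)²/(2σ²)) dx) attains its maximum over [0, ΔQ] at c = ΔQ if ΔQ ≤ (b−a)/2, and at c = (b−a)/2 otherwise. -/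
open Real Set

/-!
Substituting `t = x - a - c`, the numerator is the mass of the centred Gaussian `g` on the window
`[-c, b - a - c]`. Sliding the window by `c` changes its mass at rate `g (-c) - g (b - a - c)`,
which by symmetry and radial decay of `g` is nonnegative exactly while the window's
left end is nearer to the centre than its right end, i.e. for `c ≤ (b - a) / 2`. So the mass
increases up to `c = (b - a) / 2` and decreases afterwards.
-/

section SlidingWindow

variable {f : ℝ → ℝ} {a b : ℝ}

theorem hasDerivAt_integral_comp_sub (hf : Continuous f) (c : ℝ) :
    HasDerivAt (fun c => ∫ x in a..b, f (x - c)) (f (a - c) - f (b - c)) c := by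
  have hF : ∀ u, HasDerivAt (fun u => ∫ x in (0 : ℝ)..u, f x) (f u) u := fun u =>
    (hf.integral_hasStrictDerivAt 0 u).hasDerivAt
  have hwindow : (fun c => ∫ x in a..b, f (x - c)) =
      fun c => (∫ x in (0 : ℝ)..(b - c), f x) - ∫ x in (0 : ℝ)..(a - c), f x := by
    ext d
    rw [intervalIntegral.integral_comp_sub_right fun x => f x,
      intervalIntegral.integral_interval_sub_left (hf.intervalIntegrable _ _)
        (hf.intervalIntegrable _ _)]
  rw [hwindow, show f (a - c) - f (b - c) = f (b - c) * -1 - f (a - c) * -1 by ring]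
  exact ((hF (b - c)).comp c ((hasDerivAt_id c).const_sub b)).sub
    ((hF (a - c)).comp c ((hasDerivAt_id c).const_sub a))

theorem monotoneOn_integral_comp_sub (hf : Continuous f) (hrad : ∀ x y, |x| ≤ |y| → f y ≤ f x)
    (hab : a ≤ b) :
    MonotoneOn (fun c => ∫ x in a..b, f (x - c)) (Iic ((a + b) / 2)) := by
  refine monotoneOn_of_hasDerivWithinAt_nonneg (convex_Iic _)
    (fun c _ => (hasDerivAt_integral_comp_sub hf c).continuousAt.continuousWithinAt)
    (fun c _ => (hasDerivAt_integral_comp_sub hf c).hasDerivWithinAt) fun c hc => ?_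
  rw [interior_Iic, mem_Iio] at hc
  have : |a - c| ≤ |b - c| := sq_le_sq.1 (by nlinarith)
  linarith [hrad _ _ this]

theorem antitoneOn_integral_comp_sub (hf : Continuous f) (hrad : ∀ x y, |x| ≤ |y| → f y ≤ f x)
    (hab : a ≤ b) :
    AntitoneOn (fun c => ∫ x in a..b, f (x - c)) (Ici ((a + b) / 2)) := by
  refine antitoneOn_of_hasDerivWithinAt_nonpos (convex_Ici _)
    (fun c _ => (hasDerivAt_integral_comp_sub hf c).continuousAt.continuousWithinAt)
    (fun c _ => (hasDerivAt_integral_comp_sub hf c).hasDerivWithinAt) fun c hc => ?_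
  rw [interior_Ici, mem_Ioi] at hc
  have : |b - c| ≤ |a - c| := sq_le_sq.1 (by nlinarith)
  linarith [hrad _ _ this]

theorem isMaxOn_integral_comp_sub (hf : Continuous f) (hrad : ∀ x y, |x| ≤ |y| → f y ≤ f x)
    (hab : a ≤ b) :
    IsMaxOn (fun c => ∫ x in a..b, f (x - c)) univ ((a + b) / 2) :=
  isMaxOn_univ_of_mono_anti (monotoneOn_integral_comp_sub hf hrad hab)
    (antitoneOn_integral_comp_sub hf hrad hab)

end SlidingWindow

theorem exp_neg_sq_div_le_of_abs_le {x y k : ℝ} (hk : 0 ≤ k) (hxy : |x| ≤ |y|) :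
    exp (-y ^ 2 / k) ≤ exp (-x ^ 2 / k) := by
  gcongr exp (-?_ / _)
  exact sq_le_sq.2 hxy

theorem max_ratio_at_cstar_general (a b σ ΔQ : ℝ) (hab : a < b)
    (R : ℝ → ℝ)
    (hR : ∀ c, R c = (∫ x in a..b, Real.exp (-(x - a - c)^2 / (2 * σ^2))) /
        (∫ x in a..b, Real.exp (-(x - a)^2 / (2 * σ^2)))) :
    ∀ c ∈ Set.Icc (0:ℝ) ΔQ,
      R c ≤ R (if ΔQ ≤ (b - a) / 2 then ΔQ else (b - a) / 2) := by
  set g : ℝ → ℝ := fun t => exp (-t ^ 2 / (2 * σ ^ 2))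
  have hg : Continuous g := by fun_prop
  have hrad : ∀ x y, |x| ≤ |y| → g y ≤ g x := fun _ _ =>
    exp_neg_sq_div_le_of_abs_le (by positivity)
  have hL : (0 : ℝ) ≤ b - a := by linarith
  have hR' : ∀ c, R c = (∫ x in (0 : ℝ)..(b - a), g (x - c)) /
      ∫ x in a..b, exp (-(x - a) ^ 2 / (2 * σ ^ 2)) := fun c => by
    rw [hR, ← sub_self a, ← intervalIntegral.integral_comp_sub_right fun x => g (x - c)]
  have hD : 0 ≤ ∫ x in a..b, exp (-(x - a) ^ 2 / (2 * σ ^ 2)) :=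
    intervalIntegral.integral_nonneg hab.le fun _ _ => (exp_pos _).le
  intro c hc
  simp only [hR']
  gcongr ?_ / _
  split_ifs with hΔ
  · exact monotoneOn_integral_comp_sub hg hrad hL (hc.2.trans (by simpa using hΔ))
      (by simpa using hΔ) hc.2
  · simpa using isMaxOn_integral_comp_sub hg hrad hL (mem_univ c)

theorem max_ratio_at_cstar (a b σ ΔQ : ℝ) (hab : a < b) (hσ : 0 < σ)
    (hΔ : 0 < ΔQ) (hΔb : ΔQ ≤ b - a)
    (R : ℝ → ℝ)
    (hR : ∀ c, R c = (∫ x in a..b, Real.exp (-(x - a - c)^2 / (2 * σ^2))) /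
        (∫ x in a..b, Real.exp (-(x - a)^2 / (2 * σ^2)))) :
    ∀ c ∈ Set.Icc (0:ℝ) ΔQ,
      R c ≤ R (if ΔQ ≤ (b - a) / 2 then ΔQ else (b - a) / 2) :=
  max_ratio_at_cstar_general a b σ ΔQ hab R hR
end

section
/- For a < b, σ > 0, and 0 < c ≤ (b−a)/2, we have ∫_a^b exp(−(x−a−c)²/(2σ²)) dx > ∫_a^b exp(−(x−a)²/(2σ²)) dx; equivalently, the ratio ΔC(σ) = (∫_a^b exp(−(x−a−c)²/(2σ²)) dx)/(∫_a^b exp(−(x−a)²/(2σ²)) dx) satisfies ΔC(σ) > 1, hence ln(ΔC(σ)) > 0. -/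
open Real

/-!
Translating the window `[a, b]` to the left by `c` trades the piece `[b - c, b]` for
`[a - c, a]`. Pair `x ∈ (a - c, a)` with `x + (b - a) ∈ (b - c, b)`: the first lies within `c`
of the centre `a` of the Gaussian, the second at distance more than `b - a - c ≥ c`, so the
Gaussian is strictly larger at `x` and the translated integral wins.
-/
theorem intervalIntegral.integral_comp_sub_right_sub_integral {f : ℝ → ℝ} (hf : Continuous f)
    (a b c : ℝ) :
    (∫ x in a..b, f (x - c)) - ∫ x in a..b, f x =
      ∫ x in (a - c)..a, (f x - f (x + (b - a))) := by
  have hint : ∀ u v : ℝ, IntervalIntegrable f MeasureTheory.volume u v :=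
    hf.intervalIntegrable
  have hlost : (∫ x in (b - c)..b, f x) = ∫ x in (a - c)..a, f (x + (b - a)) := by
    rw [intervalIntegral.integral_comp_add_right]
    congr 1 <;> ring
  rw [intervalIntegral.integral_comp_sub_right,
    ← intervalIntegral.integral_add_adjacent_intervals (hint (a - c) a) (hint a (b - c)),
    ← intervalIntegral.integral_add_adjacent_intervals (hint a (b - c)) (hint (b - c) b), hlost,
    intervalIntegral.integral_sub (hint _ _)
      ((by fun_prop : Continuous fun x => f (x + (b - a))).intervalIntegrable _ _)]
  ring

theorem intervalIntegral.integral_lt_integral_comp_sub_right {f : ℝ → ℝ} (hf : Continuous f)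
    {a b c : ℝ} (hf_dist : ∀ x y, |x - a| < |y - a| → f y < f x) (hc : 0 < c)
    (hcb : c ≤ (b - a) / 2) :
    ∫ x in a..b, f x < ∫ x in a..b, f (x - c) := by
  rw [← sub_pos, integral_comp_sub_right_sub_integral hf]
  refine intervalIntegral.intervalIntegral_pos_of_pos_on
    ((by fun_prop : Continuous fun x => f x - f (x + (b - a))).intervalIntegrable _ _) ?_
    (by linarith)
  rintro x ⟨hx_left, hx_right⟩
  refine sub_pos.mpr (hf_dist _ _ ?_)
  rw [abs_of_neg (by linarith), abs_of_pos (by linarith)]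
  linarith

theorem exp_neg_sq_div_lt_of_abs_sub_lt {σ : ℝ} (hσ : σ ≠ 0) {a x y : ℝ}
    (h : |x - a| < |y - a|) :
    exp (-(y - a) ^ 2 / (2 * σ ^ 2)) < exp (-(x - a) ^ 2 / (2 * σ ^ 2)) := by
  have : (x - a) ^ 2 < (y - a) ^ 2 := sq_lt_sq.mpr h
  gcongr

theorem deltaC_gt_one (a b σ c : ℝ) (hab : a < b) (hσ : 0 < σ)
    (hc : 0 < c) (hcb : c ≤ (b - a) / 2) :
    (∫ x in a..b, Real.exp (-(x - a - c)^2 / (2 * σ^2))) >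
      (∫ x in a..b, Real.exp (-(x - a)^2 / (2 * σ^2))) ∧
    (∫ x in a..b, Real.exp (-(x - a - c)^2 / (2 * σ^2))) /
      (∫ x in a..b, Real.exp (-(x - a)^2 / (2 * σ^2))) > 1 ∧
    Real.log ((∫ x in a..b, Real.exp (-(x - a - c)^2 / (2 * σ^2))) /
      (∫ x in a..b, Real.exp (-(x - a)^2 / (2 * σ^2)))) > 0 := by
  set gaussian : ℝ → ℝ := fun x => exp (-(x - a) ^ 2 / (2 * σ ^ 2))
  have hcont : Continuous gaussian := by fun_prop
  have hshifted : (fun x => exp (-(x - a - c) ^ 2 / (2 * σ ^ 2))) = fun x => gaussian (x - c) := by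
    simp only [gaussian, sub_right_comm]
  have hlt : ∫ x in a..b, gaussian x < ∫ x in a..b, gaussian (x - c) :=
    intervalIntegral.integral_lt_integral_comp_sub_right hcont
      (fun _ _ => exp_neg_sq_div_lt_of_abs_sub_lt hσ.ne') hc hcb
  have hpos : 0 < ∫ x in a..b, gaussian x :=
    intervalIntegral.intervalIntegral_pos_of_pos_on (hcont.intervalIntegrable _ _)
      (fun _ _ => exp_pos _) hab
  rw [hshifted]
  have hratio := (one_lt_div hpos).mpr hlt
  exact ⟨hlt, hratio, log_pos hratio⟩
end

section
/- For a < b, ΔQ > 0, ε > 0, and σ₀² = ((b−a) + ΔQ/2)·ΔQ/ε, with c = min(ΔQ, (b−a)/2), the quantity ΔC(σ₀) = (∫_a^b exp(−(x−a−c)²/(2σ₀²)) dx)/(∫_a^b exp(−(x−a)²/(2σ₀²)) dx) satisfies ΔC(σ₀) < exp(ε); consequently ε − ln(ΔC(σ₀)) > 0. -/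
/-!
Write `L = b - a`. For `x ≤ b`,
`(x - a)² - (x - a - c)² = c (2 (x - a) - c) ≤ c (2L - c)`, so the shifted Gaussian integrand is
at most `exp (c (2L - c) / (2σ₀²))` times the unshifted one, and the ratio of integrals is
bounded by that factor. Since `c ≤ ΔQ`,
`c (2L - c) < (2L + ΔQ) ΔQ = 2σ₀² ε`, so the factor is below `exp ε`.
-/

open Real Set

theorem intervalIntegral_div_lt_of_le_const_mul {f g : ℝ → ℝ} {a b K L : ℝ} (hab : a < b)
    (hf : IntervalIntegrable f MeasureTheory.volume a b)
    (hg : IntervalIntegrable g MeasureTheory.volume a b)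
    (hg_pos : ∀ x ∈ Ioo a b, 0 < g x) (hfg : ∀ x ∈ Icc a b, f x ≤ K * g x) (hKL : K < L) :
    (∫ x in a..b, f x) / (∫ x in a..b, g x) < L := by
  have hint_pos : 0 < ∫ x in a..b, g x :=
    intervalIntegral.intervalIntegral_pos_of_pos_on hg hg_pos hab
  rw [div_lt_iff₀ hint_pos]
  calc (∫ x in a..b, f x) ≤ ∫ x in a..b, K * g x :=
        intervalIntegral.integral_mono_on hab.le hf (hg.const_mul K) hfg
    _ = K * ∫ x in a..b, g x := intervalIntegral.integral_const_mul K g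
    _ < L * ∫ x in a..b, g x := mul_lt_mul_of_pos_right hKL hint_pos

theorem exp_neg_sq_sub_div_le {a b c s x : ℝ} (hc : 0 ≤ c) (hs : 0 < s) (hx : x ≤ b) :
    exp (-(x - a - c) ^ 2 / s) ≤ exp (c * (2 * (b - a) - c) / s) * exp (-(x - a) ^ 2 / s) := by
  rw [← exp_add, exp_le_exp, ← add_div]
  gcongr
  nlinarith [mul_le_mul_of_nonneg_left hx hc]

theorem mul_two_mul_sub_div_lt {L Δ ε c : ℝ} (hL : 0 < L) (hΔ : 0 < Δ) (hε : 0 < ε)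
    (hc : 0 ≤ c) (hcΔ : c ≤ Δ) :
    c * (2 * L - c) / (2 * ((L + Δ / 2) * Δ / ε)) < ε := by
  have h2 : 2 * ((L + Δ / 2) * Δ / ε) = (2 * L + Δ) * Δ / ε := by ring
  rw [h2, div_lt_iff₀ (by positivity), mul_div_assoc', mul_div_cancel_left₀ _ hε.ne']
  nlinarith [mul_le_mul_of_nonneg_left hcΔ hL.le]

theorem deltaC_sigma0_lt_exp_eps_general (a b ΔQ ε : ℝ) (hab : a < b)
    (hΔ : 0 < ΔQ) (hε : 0 < ε)
    (σ₀ : ℝ) (hσ₀ : σ₀ = Real.sqrt (((b - a) + ΔQ / 2) * ΔQ / ε))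
    (c : ℝ) (hc : c = min ΔQ ((b - a) / 2)) :
    (∫ x in a..b, Real.exp (-(x - a - c)^2 / (2 * σ₀^2))) /
      (∫ x in a..b, Real.exp (-(x - a)^2 / (2 * σ₀^2))) < Real.exp ε ∧
    0 < ε - Real.log ((∫ x in a..b, Real.exp (-(x - a - c)^2 / (2 * σ₀^2))) /
      (∫ x in a..b, Real.exp (-(x - a)^2 / (2 * σ₀^2)))) := by
  have hL : 0 < b - a := sub_pos.2 hab
  have hc0 : 0 ≤ c := hc ▸ le_min hΔ.le (by linarith)
  have hcΔ : c ≤ ΔQ := hc ▸ min_le_left _ _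
  have hσ₀sq : σ₀ ^ 2 = ((b - a) + ΔQ / 2) * ΔQ / ε := by
    rw [hσ₀, sq_sqrt (by positivity)]
  have hs : 0 < 2 * σ₀ ^ 2 := by rw [hσ₀sq]; positivity
  have hint : ∀ d, IntervalIntegrable (fun x => exp (-(x - a - d) ^ 2 / (2 * σ₀ ^ 2)))
      MeasureTheory.volume a b := fun d => Continuous.intervalIntegrable (by fun_prop) a b
  have hratio_pos : 0 < (∫ x in a..b, exp (-(x - a - c) ^ 2 / (2 * σ₀ ^ 2))) /
      (∫ x in a..b, exp (-(x - a) ^ 2 / (2 * σ₀ ^ 2))) := by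
    apply div_pos <;>
      apply intervalIntegral.intervalIntegral_pos_of_pos_on _ (fun _ _ => exp_pos _) hab
    exacts [hint c, by simpa using hint 0]
  have hratio_lt := intervalIntegral_div_lt_of_le_const_mul hab (hint c) (by simpa using hint 0)
    (fun _ _ => exp_pos _) (fun x hx => exp_neg_sq_sub_div_le hc0 hs hx.2)
    (exp_lt_exp.2 (hσ₀sq ▸ mul_two_mul_sub_div_lt hL hΔ hε hc0 hcΔ))
  exact ⟨hratio_lt, sub_pos.2 ((log_lt_iff_lt_exp hratio_pos).2 hratio_lt)⟩

theorem deltaC_sigma0_lt_exp_eps (a b ΔQ ε : ℝ) (hab : a < b)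
    (hΔ : 0 < ΔQ) (hΔb : ΔQ ≤ b - a) (hε : 0 < ε)
    (σ₀ : ℝ) (hσ₀ : σ₀ = Real.sqrt (((b - a) + ΔQ / 2) * ΔQ / ε))
    (c : ℝ) (hc : c = min ΔQ ((b - a) / 2)) :
    (∫ x in a..b, Real.exp (-(x - a - c)^2 / (2 * σ₀^2))) /
      (∫ x in a..b, Real.exp (-(x - a)^2 / (2 * σ₀^2))) < Real.exp ε ∧
    0 < ε - Real.log ((∫ x in a..b, Real.exp (-(x - a - c)^2 / (2 * σ₀^2))) /
      (∫ x in a..b, Real.exp (-(x - a)^2 / (2 * σ₀^2)))) :=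
  deltaC_sigma0_lt_exp_eps_general a b ΔQ ε hab hΔ hε σ₀ hσ₀ c hc
end

section
/- For a < b, σ > 0, 0 < c ≤ (b−a)/2, the ratio ΔC(σ) = (∫_a^b exp(−(x−a−c)²/(2σ²)) dx)/(∫_a^b exp(−(x−a)²/(2σ²)) dx) is strictly decreasing in σ on (0,∞). -/
/-!
Put `s = 1 / (2σ²)` and `G s p = ∫₀^p exp (-s u²)`. Shifting the variables and using that the
Gaussian is even, `ΔC = (G s c + G s (L - c)) / G s L` with `L = b - a`. For `0 < p < L` the
ratio `G s p / G s L` strictly increases with `s`: the quotient of the Gaussians for `s₁ > s₂` is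
`exp (-(s₁ - s₂) u²)`, which lies above its value at `p` on `[0, p)` and below it on `[p, L]`.
Since `σ ↦ s` is decreasing, `ΔC` is strictly decreasing in `σ`.
-/

open Real Set intervalIntegral
open MeasureTheory (volume)

/-- Since `f / g` crosses the level `E` downwards at `p`, `f` puts relatively more of its mass on
`[x, p]` than `g` does. -/
theorem integral_mul_integral_lt_of_separated {f g : ℝ → ℝ} {x p q E : ℝ}
    (hf : IntervalIntegrable f volume x q) (hg : IntervalIntegrable g volume x q)
    (hxp : x < p) (hpq : p < q) (hg_pos : ∀ u ∈ Ioo x q, 0 < g u)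
    (hlt : ∀ u ∈ Ioo x p, E * g u < f u) (hle : ∀ u ∈ Ioo p q, f u ≤ E * g u) :
    (∫ u in x..p, g u) * (∫ u in x..q, f u) < (∫ u in x..p, f u) * (∫ u in x..q, g u) := by
  have hsub₁ : uIcc x p ⊆ uIcc x q := uIcc_subset_uIcc_left (mem_uIcc_of_le hxp.le hpq.le)
  have hsub₂ : uIcc p q ⊆ uIcc x q := uIcc_subset_uIcc_right (mem_uIcc_of_le hxp.le hpq.le)
  have hf₁ := hf.mono_set hsub₁
  have hf₂ := hf.mono_set hsub₂
  have hg₁ := hg.mono_set hsub₁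
  have hg₂ := hg.mono_set hsub₂
  have hAg : 0 < ∫ u in x..p, g u :=
    intervalIntegral_pos_of_pos_on hg₁ (fun u hu => hg_pos u ⟨hu.1, hu.2.trans hpq⟩) hxp
  have hBg : 0 < ∫ u in p..q, g u :=
    intervalIntegral_pos_of_pos_on hg₂ (fun u hu => hg_pos u ⟨hxp.trans hu.1, hu.2⟩) hpq
  have hA : E * ∫ u in x..p, g u < ∫ u in x..p, f u := by
    rw [← integral_const_mul]
    refine sub_pos.mp ?_
    rw [← integral_sub hf₁ (hg₁.const_mul E)]
    exact intervalIntegral_pos_of_pos_on (hf₁.sub (hg₁.const_mul E))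
      (fun u hu => sub_pos.mpr (hlt u hu)) hxp
  have hB : ∫ u in p..q, f u ≤ E * ∫ u in p..q, g u := by
    rw [← integral_const_mul]
    exact integral_mono_on_of_le_Ioo hpq.le hf₂ (hg₂.const_mul E) hle
  rw [← integral_add_adjacent_intervals hf₁ hf₂, ← integral_add_adjacent_intervals hg₁ hg₂]
  nlinarith [mul_le_mul_of_nonneg_left hB hAg.le, mul_lt_mul_of_pos_right hA hBg]

theorem integral_comp_sub_add_of_even {f : ℝ → ℝ} (hf : Continuous f) (heven : ∀ u, f (-u) = f u)
    (a b c : ℝ) :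
    ∫ x in a..b, f (x - a - c) = (∫ u in (0 : ℝ)..c, f u) + ∫ u in (0 : ℝ)..(b - a - c), f u := by
  have hc : ∫ u in (0 : ℝ)..c, f u = ∫ u in -c..0, f u := by
    simpa only [heven, neg_zero] using integral_comp_neg (a := 0) (b := c) f
  simp_rw [sub_sub, integral_comp_sub_right f (a + c), hc, show a - (a + c) = -c by ring]
  exact (integral_add_adjacent_intervals (hf.intervalIntegrable _ _)
    (hf.intervalIntegrable _ _)).symm

theorem integral_exp_neg_mul_sq_div_lt_of_lt {s₁ s₂ p q : ℝ} (hp : 0 < p) (hpq : p < q)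
    (hs : s₂ < s₁) :
    (∫ u in (0 : ℝ)..p, exp (-s₂ * u ^ 2)) / ∫ u in (0 : ℝ)..q, exp (-s₂ * u ^ 2) <
      (∫ u in (0 : ℝ)..p, exp (-s₁ * u ^ 2)) / ∫ u in (0 : ℝ)..q, exp (-s₁ * u ^ 2) := by
  have hint : ∀ s, IntervalIntegrable (fun u => exp (-s * u ^ 2)) volume 0 q := fun s =>
    (by fun_prop : Continuous fun u : ℝ => exp (-s * u ^ 2)).intervalIntegrable _ _
  have hpos : ∀ s, 0 < ∫ u in (0 : ℝ)..q, exp (-s * u ^ 2) := fun s =>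
    intervalIntegral_pos_of_pos_on (hint s) (fun _ _ => exp_pos _) (hp.trans hpq)
  have hfactor : ∀ u : ℝ, exp (-s₁ * u ^ 2) = exp (-(s₁ - s₂) * u ^ 2) * exp (-s₂ * u ^ 2) := by
    intro u
    rw [← exp_add]
    ring_nf
  rw [div_lt_div_iff₀ (hpos s₂) (hpos s₁)]
  refine integral_mul_integral_lt_of_separated (E := exp (-(s₁ - s₂) * p ^ 2)) (hint s₁)
    (hint s₂) hp hpq (fun _ _ => exp_pos _) (fun u hu => ?_) (fun u hu => ?_)
  · rw [hfactor u]
    have : u ^ 2 < p ^ 2 := by nlinarith [hu.1, hu.2]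
    exact mul_lt_mul_of_pos_right (exp_lt_exp.mpr (by nlinarith)) (exp_pos _)
  · rw [hfactor u]
    have : p ^ 2 ≤ u ^ 2 := by nlinarith [hu.1, hu.2]
    exact mul_le_mul_of_nonneg_right (exp_le_exp.mpr (by nlinarith)) (exp_pos _).le

theorem integral_exp_neg_sq_div_comp_sub (a b c σ : ℝ) :
    ∫ x in a..b, exp (-(x - a - c) ^ 2 / (2 * σ ^ 2)) =
      (∫ u in (0 : ℝ)..c, exp (-(2 * σ ^ 2)⁻¹ * u ^ 2)) +
        ∫ u in (0 : ℝ)..(b - a - c), exp (-(2 * σ ^ 2)⁻¹ * u ^ 2) := by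
  rw [← integral_comp_sub_add_of_even (by fun_prop) (fun u => by rw [neg_sq])]
  congr 1 with x
  ring_nf

theorem deltaC_strict_anti_in_sigma_general (a b c : ℝ)
    (hc : 0 < c) (hcb : c ≤ (b - a) / 2)
    (ΔC : ℝ → ℝ)
    (hΔC : ∀ σ, ΔC σ = (∫ x in a..b, Real.exp (-(x - a - c)^2 / (2 * σ^2))) /
        (∫ x in a..b, Real.exp (-(x - a)^2 / (2 * σ^2)))) :
    ∀ σ₁ σ₂, 0 < σ₁ → σ₁ < σ₂ → ΔC σ₁ > ΔC σ₂ := by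
  intro σ₁ σ₂ hσ₁ hσ₁₂
  have hΔC_eq (σ : ℝ) : ΔC σ =
      (∫ u in (0 : ℝ)..c, exp (-(2 * σ ^ 2)⁻¹ * u ^ 2)) /
          (∫ u in (0 : ℝ)..(b - a), exp (-(2 * σ ^ 2)⁻¹ * u ^ 2)) +
        (∫ u in (0 : ℝ)..(b - a - c), exp (-(2 * σ ^ 2)⁻¹ * u ^ 2)) /
          (∫ u in (0 : ℝ)..(b - a), exp (-(2 * σ ^ 2)⁻¹ * u ^ 2)) := by
    have hden := integral_exp_neg_sq_div_comp_sub a b 0 σ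
    simp only [sub_zero, integral_same, zero_add] at hden
    rw [hΔC, ← add_div, ← integral_exp_neg_sq_div_comp_sub, ← hden]
  have hs : (2 * σ₂ ^ 2)⁻¹ < (2 * σ₁ ^ 2)⁻¹ := by gcongr
  rw [hΔC_eq, hΔC_eq, gt_iff_lt]
  exact add_lt_add (integral_exp_neg_mul_sq_div_lt_of_lt hc (by linarith) hs)
    (integral_exp_neg_mul_sq_div_lt_of_lt (by linarith) (by linarith) hs)

theorem deltaC_strict_anti_in_sigma (a b c : ℝ) (hab : a < b)
    (hc : 0 < c) (hcb : c ≤ (b - a) / 2)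
    (ΔC : ℝ → ℝ)
    (hΔC : ∀ σ, ΔC σ = (∫ x in a..b, Real.exp (-(x - a - c)^2 / (2 * σ^2))) /
        (∫ x in a..b, Real.exp (-(x - a)^2 / (2 * σ^2)))) :
    ∀ σ₁ σ₂, 0 < σ₁ → σ₁ < σ₂ → ΔC σ₁ > ΔC σ₂ :=
  deltaC_strict_anti_in_sigma_general a b c hc hcb ΔC hΔC
end

section
/- For a < b, 0 < ΔQ ≤ b − a, ε > 0, define c = min(ΔQ,(b−a)/2), ΔC(σ) = (∫_a^b exp(−(x−a−c)²/(2σ²)) dx)/(∫_a^b exp(−(x−a)²/(2σ²)) dx), σ₀ = √(((b−a)+ΔQ/2)ΔQ/ε), and f(σ) = σ² − ((b−a)+ΔQ/2)·ΔQ/(ε − ln ΔC(σ)). Then f(σ₀) < 0. -/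
/-!
Write `g σ t = exp (-t² / (2σ²))` and `L = b - a`, so that `ΔC σ` is the ratio of `∫₀ᴸ g σ (t - c)`
to `∫₀ᴸ g σ t`. Since `g σ` is even and strictly decreasing in `|t|` and `0 < c < L`, moving the
window `[0, L]` to `[-c, L - c]` trades `∫_{L-c}^L g σ` for the strictly larger `∫_{-c}^0 g σ`,
so `ΔC σ > 1`. On the other hand `g σ (t - c) = exp ((2tc - c²) / (2σ²)) g σ t`, and at `σ = σ₀`
the exponent stays below `ε` on `[0, L]` because `2Lc - c² < 2LΔQ + ΔQ² = 2σ₀²ε`; hence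
`ΔC σ₀ < exp ε`. Thus `0 < log ΔC σ₀ < ε`, and `f σ₀ = K / ε - K / (ε - log ΔC σ₀) < 0`
with `K = (L + ΔQ / 2) ΔQ`.
-/

open Real Set

theorem integral_comp_sub_lt_integral_comp_sub_sub {g : ℝ → ℝ} (hg : Continuous g)
    (heven : Function.Even g) (hanti : StrictAntiOn g (Ici 0)) {a b c : ℝ} (hc : 0 < c)
    (hcb : c < b - a) :
    ∫ x in a..b, g (x - a) < ∫ x in a..b, g (x - a - c) := by
  set d := b - a - c
  have hd : 0 < d := sub_pos.2 hcb
  have hint : ∀ u v : ℝ, IntervalIntegrable g MeasureTheory.volume u v :=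
    hg.intervalIntegrable
  have hint_shift : IntervalIntegrable (fun x => g (x + d)) MeasureTheory.volume 0 c :=
    (hg.comp (continuous_add_const d)).intervalIntegrable 0 c
  have hleft : ∫ x in a..b, g (x - a) = (∫ x in 0..d, g x) + ∫ x in 0..c, g (x + d) := by
    rw [intervalIntegral.integral_comp_sub_right g a, sub_self,
      ← intervalIntegral.integral_add_adjacent_intervals (hint 0 d) (hint d (b - a)),
      intervalIntegral.integral_comp_add_right g d, zero_add, show c + d = b - a by ring]
  have hright : ∫ x in a..b, g (x - a - c) = (∫ x in 0..c, g x) + ∫ x in 0..d, g x := by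
    rw [intervalIntegral.integral_comp_sub_right (fun y => g (y - c)) a, sub_self,
      intervalIntegral.integral_comp_sub_right g c, zero_sub,
      ← intervalIntegral.integral_add_adjacent_intervals (hint (-c) 0) (hint 0 d)]
    congr 1
    simpa only [heven _, neg_zero] using
      (intervalIntegral.integral_comp_neg (a := 0) (b := c) g).symm
  have hgap : 0 < ∫ x in 0..c, (g x - g (x + d)) :=
    intervalIntegral.intervalIntegral_pos_of_pos_on ((hint 0 c).sub hint_shift)
      (fun x hx => sub_pos.2 <| hanti (mem_Ici.2 hx.1.le) (mem_Ici.2 (by linarith [hx.1]))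
        (lt_add_of_pos_right x hd)) hc
  rw [intervalIntegral.integral_sub (hint 0 c) hint_shift] at hgap
  rw [hleft, hright]
  linarith

theorem even_exp_neg_sq_div (σ : ℝ) : Function.Even fun t : ℝ => exp (-t ^ 2 / (2 * σ ^ 2)) :=
  fun t => by simp only [neg_sq]

theorem strictAntiOn_exp_neg_sq_div {σ : ℝ} (hσ : σ ≠ 0) :
    StrictAntiOn (fun t : ℝ => exp (-t ^ 2 / (2 * σ ^ 2))) (Ici 0) :=
  fun _ hx _ _ hxy => exp_lt_exp.2 <| div_lt_div_of_pos_right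
    (neg_lt_neg (pow_lt_pow_left₀ hxy hx two_ne_zero)) (by positivity)

theorem integral_exp_neg_sq_div_pos {a b : ℝ} (hab : a < b) (σ t₀ : ℝ) :
    0 < ∫ x in a..b, exp (-(x - t₀) ^ 2 / (2 * σ ^ 2)) :=
  intervalIntegral.intervalIntegral_pos_of_pos
    (Continuous.intervalIntegrable (by fun_prop) a b) (fun _ => exp_pos _) hab

theorem one_lt_gaussian_shift_ratio {a b c σ : ℝ} (hab : a < b) (hσ : σ ≠ 0) (hc : 0 < c)
    (hcb : c < b - a) :
    1 < (∫ x in a..b, exp (-(x - a - c) ^ 2 / (2 * σ ^ 2))) /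
      ∫ x in a..b, exp (-(x - a) ^ 2 / (2 * σ ^ 2)) := by
  rw [one_lt_div (integral_exp_neg_sq_div_pos hab σ a)]
  exact integral_comp_sub_lt_integral_comp_sub_sub (by fun_prop) (even_exp_neg_sq_div σ)
    (strictAntiOn_exp_neg_sq_div hσ) hc hcb

theorem exp_neg_sub_sq_div_lt {t c σ ε : ℝ} (hσ : σ ≠ 0)
    (h : 2 * t * c - c ^ 2 < 2 * σ ^ 2 * ε) :
    exp (-(t - c) ^ 2 / (2 * σ ^ 2)) < exp ε * exp (-t ^ 2 / (2 * σ ^ 2)) := by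
  rw [← exp_add, exp_lt_exp, ← sub_pos]
  have h2σ : 0 < 2 * σ ^ 2 := by positivity
  have : ε + -t ^ 2 / (2 * σ ^ 2) - -(t - c) ^ 2 / (2 * σ ^ 2) =
      (2 * σ ^ 2 * ε - (2 * t * c - c ^ 2)) / (2 * σ ^ 2) := by
    field_simp
    ring
  rw [this]
  exact div_pos (sub_pos.2 h) h2σ

theorem gaussian_shift_ratio_lt_exp {a b c σ ε : ℝ} (hab : a < b) (hσ : σ ≠ 0) (hc : 0 ≤ c)
    (h : 2 * (b - a) * c - c ^ 2 < 2 * σ ^ 2 * ε) :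
    (∫ x in a..b, exp (-(x - a - c) ^ 2 / (2 * σ ^ 2))) /
      ∫ x in a..b, exp (-(x - a) ^ 2 / (2 * σ ^ 2)) < exp ε := by
  rw [div_lt_iff₀ (integral_exp_neg_sq_div_pos hab σ a), ← intervalIntegral.integral_const_mul]
  have hpt : ∀ x ∈ Icc a b, exp (-(x - a - c) ^ 2 / (2 * σ ^ 2)) <
      exp ε * exp (-(x - a) ^ 2 / (2 * σ ^ 2)) := fun x hx =>
    exp_neg_sub_sq_div_lt hσ <| by nlinarith [hx.2]
  exact intervalIntegral.integral_lt_integral_of_continuousOn_of_le_of_exists_lt hab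
    (by fun_prop) (by fun_prop) (fun x hx => (hpt x (Ioc_subset_Icc_self hx)).le)
    ⟨a, left_mem_Icc.2 hab.le, hpt a (left_mem_Icc.2 hab.le)⟩

theorem f_sigma0_neg_general (a b ΔQ ε : ℝ) (hab : a < b)
    (hΔ : 0 < ΔQ) (hε : 0 < ε)
    (c : ℝ) (hc : c = min ΔQ ((b - a) / 2))
    (ΔC : ℝ → ℝ)
    (hΔC : ∀ σ, ΔC σ = (∫ x in a..b, Real.exp (-(x - a - c)^2 / (2 * σ^2))) /
        (∫ x in a..b, Real.exp (-(x - a)^2 / (2 * σ^2))))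
    (σ₀ : ℝ) (hσ₀ : σ₀ = Real.sqrt (((b - a) + ΔQ / 2) * ΔQ / ε))
    (f : ℝ → ℝ)
    (hf : ∀ σ, f σ = σ^2 - ((b - a) + ΔQ / 2) * ΔQ / (ε - Real.log (ΔC σ))) :
    f σ₀ < 0 := by
  set K := ((b - a) + ΔQ / 2) * ΔQ with hK_def
  have hK : 0 < K := mul_pos (by linarith) hΔ
  have hσ₀sq : σ₀ ^ 2 = K / ε := by rw [hσ₀, sq_sqrt (by positivity)]
  have hσ₀ne : σ₀ ≠ 0 := by rw [hσ₀]; exact (sqrt_pos.2 (by positivity)).ne'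
  have hc_pos : 0 < c := hc ▸ lt_min hΔ (by linarith)
  have hcΔ : c ≤ ΔQ := hc ▸ min_le_left _ _
  have hcb : c < b - a := (hc ▸ min_le_right _ _ : c ≤ (b - a) / 2).trans_lt (by linarith)
  have hexponent : 2 * (b - a) * c - c ^ 2 < 2 * σ₀ ^ 2 * ε := by
    rw [hσ₀sq, mul_assoc 2 (K / ε), div_mul_cancel₀ K hε.ne', hK_def]
    nlinarith [mul_le_mul_of_nonneg_left hcΔ (sub_pos.2 hab).le]
  have hΔC_gt : 1 < ΔC σ₀ := hΔC σ₀ ▸ one_lt_gaussian_shift_ratio hab hσ₀ne hc_pos hcb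
  have hlog_pos : 0 < log (ΔC σ₀) := log_pos hΔC_gt
  have hlog_lt : log (ΔC σ₀) < ε :=
    (log_lt_iff_lt_exp (by linarith)).2
      (hΔC σ₀ ▸ gaussian_shift_ratio_lt_exp hab hσ₀ne hc_pos.le hexponent)
  rw [hf σ₀, hσ₀sq, sub_neg]
  exact div_lt_div_of_pos_left hK (by linarith) (by linarith)

theorem f_sigma0_neg (a b ΔQ ε : ℝ) (hab : a < b)
    (hΔ : 0 < ΔQ) (hΔb : ΔQ ≤ b - a) (hε : 0 < ε)
    (c : ℝ) (hc : c = min ΔQ ((b - a) / 2))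
    (ΔC : ℝ → ℝ)
    (hΔC : ∀ σ, ΔC σ = (∫ x in a..b, Real.exp (-(x - a - c)^2 / (2 * σ^2))) /
        (∫ x in a..b, Real.exp (-(x - a)^2 / (2 * σ^2))))
    (σ₀ : ℝ) (hσ₀ : σ₀ = Real.sqrt (((b - a) + ΔQ / 2) * ΔQ / ε))
    (f : ℝ → ℝ)
    (hf : ∀ σ, f σ = σ^2 - ((b - a) + ΔQ / 2) * ΔQ / (ε - Real.log (ΔC σ))) :
    f σ₀ < 0 :=
  f_sigma0_neg_general a b ΔQ ε hab hΔ hε c hc ΔC hΔC σ₀ hσ₀ f hf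
end

section
/- Let a < b, ΔQ > 0, ε > 0, c = min(ΔQ,(b−a)/2), and σ > 0 satisfy σ² ≥ ((b−a)+ΔQ/2)·ΔQ/(ε − ln ΔC(σ)) where ΔC(σ) = (∫_a^b exp(−(x−a−c)²/(2σ²)) dx)/(∫_a^b exp(−(x−a)²/(2σ²)) dx) and ε − ln ΔC(σ) > 0. Then for all s, s' ∈ [a,b] with |s − s'| ≤ ΔQ and all z ∈ [a,b], the truncated-Gaussian densities p_s and p_{s'} on [a,b] (with p_s(z) proportional to exp(−(z−s)²/(2σ²)) normalized over [a,b]) satisfy p_s(z) ≤ exp(ε)·p_{s'}(z). -/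
/-!
The likelihood ratio `p s z / p s' z` splits into a Gaussian factor
`exp (((z - s')² - (z - s)²) / (2σ²)) ≤ exp (((b - a) + ΔQ / 2) ΔQ / σ²)` and the ratio
`M s' / M s` of normalising masses `M s = ∫ x in a..b, exp (-(x - s)² / (2σ²))`.
The mass is symmetric about the midpoint of `[a, b]`, increasing to its left, and log-concave:
its logarithmic derivative is antitone by total positivity of the Gaussian kernel. Folding `s`
and `s'` into the left half therefore bounds `M s' / M s` by the increment from the endpoint,
`M (a + c) / M a = ΔC`.
-/

open Real Set

namespace BoundedGaussian

variable (σ : ℝ)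

noncomputable def kernel (x : ℝ) : ℝ := exp (-x ^ 2 / (2 * σ ^ 2))

noncomputable def mass (a b s : ℝ) : ℝ := ∫ x in a..b, kernel σ (x - s)

noncomputable def massDeriv (a b s : ℝ) : ℝ := kernel σ (a - s) - kernel σ (b - s)

@[fun_prop]
theorem continuous_kernel : Continuous (kernel σ) := by
  unfold kernel; fun_prop

theorem kernel_pos (x : ℝ) : 0 < kernel σ x := exp_pos _

theorem kernel_le_kernel {x y : ℝ} (h : x ^ 2 ≤ y ^ 2) : kernel σ y ≤ kernel σ x := by
  unfold kernel
  gcongr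

theorem kernel_mul_kernel_le {p q r w : ℝ} (h : r ^ 2 + w ^ 2 ≤ p ^ 2 + q ^ 2) :
    kernel σ p * kernel σ q ≤ kernel σ r * kernel σ w := by
  simp only [kernel, ← exp_add, ← add_div, exp_le_exp]
  exact div_le_div_of_nonneg_right (by linarith) (by positivity)

theorem kernel_le_exp_mul_kernel {z s s' R Δ : ℝ} (hzs : |z - s| ≤ R) (hss' : |s - s'| ≤ Δ) :
    kernel σ (z - s) ≤ exp ((R + Δ / 2) * Δ / σ ^ 2) * kernel σ (z - s') := by
  have hcross : (s - s') * (z - s) ≤ Δ * R := (le_abs_self _).trans <| by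
    rw [abs_mul]
    exact mul_le_mul hss' hzs (abs_nonneg _) ((abs_nonneg _).trans hss')
  have hsq : (s - s') ^ 2 ≤ Δ ^ 2 := by
    rw [← sq_abs]
    exact pow_le_pow_left₀ (abs_nonneg _) hss' 2
  rw [kernel, kernel, ← exp_add, exp_le_exp, ← sub_nonneg]
  have hdiff : (R + Δ / 2) * Δ / σ ^ 2 + -(z - s') ^ 2 / (2 * σ ^ 2) - -(z - s) ^ 2 / (2 * σ ^ 2)
      = (2 * (Δ * R - (s - s') * (z - s)) + (Δ ^ 2 - (s - s') ^ 2)) / (2 * σ ^ 2) := by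
    ring
  rw [hdiff]
  exact div_nonneg (by linarith) (by positivity)

variable {σ} {a b : ℝ}

theorem mass_pos (hab : a < b) (s : ℝ) : 0 < mass σ a b s :=
  intervalIntegral.intervalIntegral_pos_of_pos
    (((continuous_kernel σ).comp (continuous_sub_right s)).intervalIntegrable a b)
    (fun _ ↦ kernel_pos σ _) hab

theorem hasDerivAt_mass (a b s : ℝ) : HasDerivAt (mass σ a b) (massDeriv σ a b s) s := by
  have hk := continuous_kernel σ
  set Φ : ℝ → ℝ := fun u ↦ ∫ x in (0 : ℝ)..u, kernel σ x
  have hΦ (u : ℝ) : HasDerivAt Φ (kernel σ u) u := (hk.integral_hasStrictDerivAt 0 u).hasDerivAt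
  have hmass : mass σ a b = fun s ↦ Φ (b - s) - Φ (a - s) := by
    funext s
    rw [mass, intervalIntegral.integral_comp_sub_right (kernel σ),
      intervalIntegral.integral_interval_sub_left (hk.intervalIntegrable _ _)
        (hk.intervalIntegrable _ _)]
  rw [hmass]
  have h := ((hΦ (b - s)).comp_const_sub b s).sub ((hΦ (a - s)).comp_const_sub a s)
  rw [neg_sub_neg] at h
  exact h

theorem differentiable_mass (a b : ℝ) : Differentiable ℝ (mass σ a b) :=
  fun s ↦ (hasDerivAt_mass a b s).differentiableAt

theorem deriv_mass (a b : ℝ) : deriv (mass σ a b) = massDeriv σ a b :=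
  funext fun s ↦ (hasDerivAt_mass a b s).deriv

theorem mass_reflect (a b s : ℝ) : mass σ a b (a + b - s) = mass σ a b s := by
  have h := intervalIntegral.integral_comp_sub_left (a := a) (b := b)
    (fun x ↦ kernel σ (x - s)) (a + b)
  rw [add_sub_cancel_right, add_sub_cancel_left] at h
  rw [mass, mass, ← h]
  congr 1
  funext x
  unfold kernel
  ring_nf

theorem mass_fold (a b s : ℝ) : mass σ a b ((a + b) / 2 - |s - (a + b) / 2|) = mass σ a b s := by
  rcases le_total s ((a + b) / 2) with h | h
  · rw [abs_of_nonpos (by linarith)]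
    ring_nf
  · rw [abs_of_nonneg (by linarith), ← mass_reflect]
    ring_nf

theorem monotoneOn_mass (hab : a ≤ b) : MonotoneOn (mass σ a b) (Iic ((a + b) / 2)) := by
  refine monotoneOn_of_deriv_nonneg (convex_Iic _) (differentiable_mass a b).continuous.continuousOn
    (differentiable_mass a b).differentiableOn fun s hs ↦ ?_
  rw [interior_Iic, mem_Iio] at hs
  rw [deriv_mass, massDeriv, sub_nonneg]
  exact kernel_le_kernel σ (by nlinarith)

-- Total positivity of order two of the Gaussian kernel, tested against the endpoints.
theorem massDeriv_mul_kernel_le {s t x : ℝ} (hst : s ≤ t) (hx : x ∈ Icc a b) :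
    massDeriv σ a b t * kernel σ (x - s) ≤ massDeriv σ a b s * kernel σ (x - t) := by
  have ha : kernel σ (a - t) * kernel σ (x - s) ≤ kernel σ (a - s) * kernel σ (x - t) :=
    kernel_mul_kernel_le σ (by nlinarith [mul_nonneg (sub_nonneg.2 hst) (sub_nonneg.2 hx.1)])
  have hb : kernel σ (b - s) * kernel σ (x - t) ≤ kernel σ (b - t) * kernel σ (x - s) :=
    kernel_mul_kernel_le σ (by nlinarith [mul_nonneg (sub_nonneg.2 hst) (sub_nonneg.2 hx.2)])
  simp only [massDeriv, sub_mul]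
  linarith

theorem antitone_massDeriv_div_mass (hab : a < b) :
    Antitone fun s ↦ massDeriv σ a b s / mass σ a b s := by
  intro s t hst
  rw [div_le_div_iff₀ (mass_pos hab t) (mass_pos hab s), mass, mass,
    ← intervalIntegral.integral_const_mul, ← intervalIntegral.integral_const_mul]
  have hint (u v : ℝ) : IntervalIntegrable (fun x ↦ massDeriv σ a b u * kernel σ (x - v))
      MeasureTheory.volume a b := by
    apply Continuous.intervalIntegrable
    fun_prop
  exact intervalIntegral.integral_mono_on hab.le (hint _ _) (hint _ _)
    fun x hx ↦ massDeriv_mul_kernel_le hst hx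

-- Log-concavity of the mass, as decreasing increments of its logarithm.
theorem antitone_log_mass_add_sub_log_mass (hab : a < b) {δ : ℝ} (hδ : 0 ≤ δ) :
    Antitone fun s ↦ log (mass σ a b (s + δ)) - log (mass σ a b s) := by
  have hlog (s : ℝ) : HasDerivAt (fun s ↦ log (mass σ a b s))
      (massDeriv σ a b s / mass σ a b s) s :=
    (hasDerivAt_mass a b s).log (mass_pos hab s).ne'
  have hinc (s : ℝ) : HasDerivAt (fun s ↦ log (mass σ a b (s + δ)) - log (mass σ a b s))
      (massDeriv σ a b (s + δ) / mass σ a b (s + δ) - massDeriv σ a b s / mass σ a b s) s :=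
    ((hlog (s + δ)).comp_add_const s δ).sub (hlog s)
  refine antitone_of_deriv_nonpos (fun s ↦ (hinc s).differentiableAt) fun s ↦ ?_
  rw [(hinc s).deriv, sub_nonpos]
  exact antitone_massDeriv_div_mass hab (le_add_of_nonneg_right hδ)

theorem mass_add_mul_mass_le (hab : a < b) {s δ : ℝ} (has : a ≤ s) (hδ : 0 ≤ δ) :
    mass σ a b (s + δ) * mass σ a b a ≤ mass σ a b (a + δ) * mass σ a b s := by
  have h := antitone_log_mass_add_sub_log_mass (σ := σ) hab hδ has
  have hpos := mass_pos (σ := σ) hab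
  rw [← log_le_log_iff (mul_pos (hpos _) (hpos _)) (mul_pos (hpos _) (hpos _)),
    log_mul (hpos _).ne' (hpos _).ne', log_mul (hpos _).ne' (hpos _).ne']
  linarith

theorem fold_mem_Icc {t : ℝ} (ht : t ∈ Icc a b) :
    (a + b) / 2 - |t - (a + b) / 2| ∈ Icc a ((a + b) / 2) := by
  have : |t - (a + b) / 2| ≤ (b - a) / 2 := abs_le.2 ⟨by linarith [ht.1], by linarith [ht.2]⟩
  exact ⟨by linarith, by linarith [abs_nonneg (t - (a + b) / 2)]⟩

theorem mass_mul_mass_le (hab : a < b) {Δ s s' : ℝ} (hs : s ∈ Icc a b) (hs' : s' ∈ Icc a b)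
    (hss' : |s - s'| ≤ Δ) :
    mass σ a b s' * mass σ a b a ≤ mass σ a b (a + min Δ ((b - a) / 2)) * mass σ a b s := by
  set c := min Δ ((b - a) / 2)
  have hc : 0 ≤ c := le_min ((abs_nonneg _).trans hss') (by linarith)
  have hac : a + c ∈ Iic ((a + b) / 2) := by
    rw [mem_Iic]; linarith [min_le_right Δ ((b - a) / 2)]
  have hmono := monotoneOn_mass (σ := σ) hab.le
  have hpos := mass_pos (σ := σ) hab
  rw [← mass_fold a b s, ← mass_fold a b s']
  have hu := fold_mem_Icc hs
  have hu' := fold_mem_Icc hs'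
  set u := (a + b) / 2 - |s - (a + b) / 2|
  set u' := (a + b) / 2 - |s' - (a + b) / 2|
  rcases le_total u' u with h | h
  · calc mass σ a b u' * mass σ a b a ≤ mass σ a b u * mass σ a b (a + c) :=
          mul_le_mul (hmono hu'.2 hu.2 h) (hmono (by rw [mem_Iic]; linarith) hac (by linarith))
            (hpos _).le (hpos _).le
      _ = mass σ a b (a + c) * mass σ a b u := mul_comm _ _
  · have hδ : u' - u ≤ c := by
      refine le_min ?_ (by linarith [hu.1, hu'.2])
      calc u' - u = |s - (a + b) / 2| - |s' - (a + b) / 2| := by ring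
        _ ≤ |s - s'| := (abs_sub_abs_le_abs_sub _ _).trans (by rw [sub_sub_sub_cancel_right])
        _ ≤ Δ := hss'
    calc mass σ a b u' * mass σ a b a
        = mass σ a b (u + (u' - u)) * mass σ a b a := by rw [add_sub_cancel]
      _ ≤ mass σ a b (a + (u' - u)) * mass σ a b u :=
        mass_add_mul_mass_le hab hu.1 (sub_nonneg.2 h)
      _ ≤ mass σ a b (a + c) * mass σ a b u := by
        gcongr
        · exact (hpos _).le
        · exact hmono (by rw [mem_Iic]; linarith [hu.1, hu'.2]) hac (by linarith)

end BoundedGaussian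

open BoundedGaussian

theorem bounded_gaussian_dp_general (a b ΔQ ε σ : ℝ) (hab : a < b)
    (c : ℝ) (hc : c = min ΔQ ((b - a) / 2))
    (ΔC : ℝ) (hΔC : ΔC = (∫ x in a..b, Real.exp (-(x - a - c)^2 / (2 * σ^2))) /
        (∫ x in a..b, Real.exp (-(x - a)^2 / (2 * σ^2))))
    (hden : 0 < ε - Real.log ΔC)
    (hσ2 : σ^2 ≥ ((b - a) + ΔQ / 2) * ΔQ / (ε - Real.log ΔC))
    (p : ℝ → ℝ → ℝ)
    (hp : ∀ s z, p s z = Real.exp (-(z - s)^2 / (2 * σ^2)) /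
        ∫ x in a..b, Real.exp (-(x - s)^2 / (2 * σ^2))) :
    ∀ s ∈ Set.Icc a b, ∀ s' ∈ Set.Icc a b, |s - s'| ≤ ΔQ →
      ∀ z ∈ Set.Icc a b, p s z ≤ Real.exp ε * p s' z := by
  intro s hs s' hs' hss' z hz
  have hp' (t : ℝ) : p t z = kernel σ (z - t) / mass σ a b t := hp t z
  have hΔC' : ΔC = mass σ a b (a + c) / mass σ a b a := by
    simp only [hΔC, mass, kernel, sub_sub]
  have hΔCpos : 0 < ΔC := hΔC' ▸ div_pos (mass_pos hab _) (mass_pos hab _)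
  have hratio : mass σ a b s' / mass σ a b s ≤ ΔC := by
    rw [hΔC', div_le_div_iff₀ (mass_pos hab _) (mass_pos hab _), hc]
    exact mass_mul_mass_le hab hs hs' hss'
  set B := ((b - a) + ΔQ / 2) * ΔQ / σ ^ 2
  have hB : B ≤ ε - log ΔC :=
    div_le_of_le_mul₀ (sq_nonneg σ) hden.le <| by
      rw [mul_comm (ε - log ΔC)]
      rwa [ge_iff_le, div_le_iff₀ hden] at hσ2
  have hkernel : kernel σ (z - s) ≤ exp B * kernel σ (z - s') :=
    kernel_le_exp_mul_kernel σ (by simpa [Real.dist_eq] using Real.dist_le_of_mem_Icc hz hs) hss'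
  have hps' : 0 ≤ p s' z := by rw [hp']; exact div_nonneg (kernel_pos σ _).le (mass_pos hab _).le
  calc p s z = kernel σ (z - s) / mass σ a b s := hp' s
    _ ≤ exp B * kernel σ (z - s') / mass σ a b s := by gcongr; exact (mass_pos hab s).le
    _ = exp B * (mass σ a b s' / mass σ a b s) * p s' z := by
      rw [hp']; field_simp [(mass_pos hab s').ne']
    _ ≤ exp B * ΔC * p s' z := by gcongr
    _ = exp (B + log ΔC) * p s' z := by rw [exp_add, exp_log hΔCpos]
    _ ≤ exp ε * p s' z := by gcongr; linarith

theorem bounded_gaussian_dp (a b ΔQ ε σ : ℝ) (hab : a < b)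
    (hΔ : 0 < ΔQ) (hε : 0 < ε) (hσ : 0 < σ)
    (c : ℝ) (hc : c = min ΔQ ((b - a) / 2))
    (ΔC : ℝ) (hΔC : ΔC = (∫ x in a..b, Real.exp (-(x - a - c)^2 / (2 * σ^2))) /
        (∫ x in a..b, Real.exp (-(x - a)^2 / (2 * σ^2))))
    (hden : 0 < ε - Real.log ΔC)
    (hσ2 : σ^2 ≥ ((b - a) + ΔQ / 2) * ΔQ / (ε - Real.log ΔC))
    (p : ℝ → ℝ → ℝ)
    (hp : ∀ s z, p s z = Real.exp (-(z - s)^2 / (2 * σ^2)) /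
        ∫ x in a..b, Real.exp (-(x - s)^2 / (2 * σ^2))) :
    ∀ s ∈ Set.Icc a b, ∀ s' ∈ Set.Icc a b, |s - s'| ≤ ΔQ →
      ∀ z ∈ Set.Icc a b, p s z ≤ Real.exp ε * p s' z :=
  bounded_gaussian_dp_general a b ΔQ ε σ hab c hc ΔC hΔC hden hσ2 p hp
end

section
/- For σ > 0, ε > 0, a < b, 0 < ΔQ ≤ b − a, if σ² ≥ ((b−a)+ΔQ/2)·ΔQ/ε then for all x ∈ [0, b−a] and all c with |c| ≤ ΔQ, exp((2xc + c²)/(2σ²)) ≤ exp(ε). -/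
open Real

theorem two_mul_mul_add_sq_le_of_abs_le {x c L Δ : ℝ} (hx0 : 0 ≤ x) (hxL : x ≤ L)
    (hc : |c| ≤ Δ) : 2 * x * c + c ^ 2 ≤ 2 * ((L + Δ / 2) * Δ) := by
  have hcross : x * c ≤ L * Δ :=
    calc x * c ≤ x * |c| := mul_le_mul_of_nonneg_left (le_abs_self c) hx0
      _ ≤ L * Δ := mul_le_mul hxL hc (abs_nonneg c) (hx0.trans hxL)
  have hsq : c ^ 2 ≤ Δ ^ 2 := sq_le_sq' (neg_le_of_abs_le hc) (le_of_abs_le hc)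
  nlinarith

theorem div_two_mul_sq_le_of_div_le_sq {t K σ ε : ℝ} (hσ : 0 < σ) (hε : 0 < ε)
    (ht : t ≤ 2 * K) (hσ2 : σ ^ 2 ≥ K / ε) : t / (2 * σ ^ 2) ≤ ε := by
  rw [ge_iff_le, div_le_iff₀ hε] at hσ2
  rw [div_le_iff₀ (by positivity)]
  linarith

theorem calibration_inequality_general (σ ε a b ΔQ : ℝ) (hσ : 0 < σ) (hε : 0 < ε)
    (hσ2 : σ^2 ≥ ((b - a) + ΔQ / 2) * ΔQ / ε) :
    ∀ x, 0 ≤ x → x ≤ b - a → ∀ c, |c| ≤ ΔQ →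
      Real.exp ((2 * x * c + c^2) / (2 * σ^2)) ≤ Real.exp ε := by
  intro x hx0 hxb c hc
  exact exp_le_exp.mpr <| div_two_mul_sq_le_of_div_le_sq hσ hε
    (two_mul_mul_add_sq_le_of_abs_le hx0 hxb hc) hσ2

theorem calibration_inequality (σ ε a b ΔQ : ℝ) (hσ : 0 < σ) (hε : 0 < ε)
    (hab : a < b) (hΔ : 0 < ΔQ) (hΔb : ΔQ ≤ b - a)
    (hσ2 : σ^2 ≥ ((b - a) + ΔQ / 2) * ΔQ / ε) :
    ∀ x, 0 ≤ x → x ≤ b - a → ∀ c, |c| ≤ ΔQ →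
      Real.exp ((2 * x * c + c^2) / (2 * σ^2)) ≤ Real.exp ε :=
  calibration_inequality_general σ ε a b ΔQ hσ hε hσ2
end
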